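/- Let S, O be finite sets, η ∈ (0,1], and K : S × O → ℝ an observation kernel with K(s,o) ≥ η for all s, o and ∑_o K(s,o) = 1. Fix s⋆ ∈ S and let P(o) := K(s⋆, o). For a belief b on S set Q_b(o) := ∑_s b(s) K(s,o) and define the informativeness I(b) := ∑_o P(o) log(P(o)/Q_b(o)). Then for any two beliefs b, b' on S, |I(b) − I(b')| ≤ (1/η) ∑_s |b(s) − b'(s)|. -/
import Mathlib

lemma log_lip_aux {η x y : ℝ} (hη : 0 < η) (hx : η ≤ x) (hy : η ≤ y) (hxy : y ≤ x) :
    Real.log x - Real.log y ≤ (x - y) / η := by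
  have hy0 : 0 < y := lt_of_lt_of_le hη hy
  have hx0 : 0 < x := lt_of_lt_of_le hη hx
  have h1 : Real.log x - Real.log y = Real.log (x / y) := (Real.log_div hx0.ne' hy0.ne').symm
  rw [h1]
  have h2 : Real.log (x / y) ≤ x / y - 1 := Real.log_le_sub_one_of_pos (div_pos hx0 hy0)
  have h3 : x / y - 1 = (x - y) / y := by field_simp
  have h4 : (x - y) / y ≤ (x - y) / η := by
    gcongr
  linarith

lemma log_lip {η x y : ℝ} (hη : 0 < η) (hx : η ≤ x) (hy : η ≤ y) :
    |Real.log x - Real.log y| ≤ |x - y| / η := by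
  rcases le_total y x with h | h
  · rw [abs_of_nonneg (by linarith : (0:ℝ) ≤ x - y),
      abs_of_nonneg (sub_nonneg.2 (Real.log_le_log (lt_of_lt_of_le hη hy) h))]
    exact log_lip_aux hη hx hy h
  · rw [abs_sub_comm, abs_sub_comm x y,
      abs_of_nonneg (by linarith : (0:ℝ) ≤ y - x),
      abs_of_nonneg (sub_nonneg.2 (Real.log_le_log (lt_of_lt_of_le hη hx) h))]
    exact log_lip_aux hη hy hx h

theorem informativeness_belief_lipschitz {S O : Type*} [Fintype S] [Fintype O]
    (η : ℝ) (hη : 0 < η) (hη1 : η ≤ 1)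
    (K : S → O → ℝ) (hKη : ∀ s o, η ≤ K s o) (hKrow : ∀ s, ∑ o, K s o = 1)
    (sstar : S)
    (b b' : S → ℝ) (hb0 : ∀ s, 0 ≤ b s) (hb1 : ∑ s, b s = 1)
    (hb'0 : ∀ s, 0 ≤ b' s) (hb'1 : ∑ s, b' s = 1) :
    |(∑ o, K sstar o * Real.log (K sstar o / ∑ s, b s * K s o)) -
      (∑ o, K sstar o * Real.log (K sstar o / ∑ s, b' s * K s o))| ≤
      (1 / η) * ∑ s, |b s - b' s| := by
  have hK0 : ∀ s o, 0 < K s o := fun s o => lt_of_lt_of_le hη (hKη s o)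
  have hQ : ∀ (c : S → ℝ), (∀ s, 0 ≤ c s) → (∑ s, c s = 1) →
      ∀ o, η ≤ ∑ s, c s * K s o := by
    intro c hc0 hc1 o
    calc η = ∑ s, c s * η := by rw [← Finset.sum_mul, hc1, one_mul]
    _ ≤ ∑ s, c s * K s o := Finset.sum_le_sum fun s _ =>
        mul_le_mul_of_nonneg_left (hKη s o) (hc0 s)
  have hQb := hQ b hb0 hb1
  have hQb' := hQ b' hb'0 hb'1
  have hK1 : ∀ o, K sstar o ≤ 1 := by
    intro o
    rw [← hKrow sstar]
    exact Finset.single_le_sum (fun o' _ => (hK0 sstar o').le) (Finset.mem_univ o)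
  -- rewrite the difference
  have key : (∑ o, K sstar o * Real.log (K sstar o / ∑ s, b s * K s o)) -
      (∑ o, K sstar o * Real.log (K sstar o / ∑ s, b' s * K s o)) =
      ∑ o, K sstar o * (Real.log (∑ s, b' s * K s o) - Real.log (∑ s, b s * K s o)) := by
    rw [← Finset.sum_sub_distrib]
    refine Finset.sum_congr rfl fun o _ => ?_
    rw [Real.log_div (hK0 sstar o).ne' (lt_of_lt_of_le hη (hQb o)).ne',
      Real.log_div (hK0 sstar o).ne' (lt_of_lt_of_le hη (hQb' o)).ne']
    ring
  rw [key]
  calc |∑ o, K sstar o * (Real.log (∑ s, b' s * K s o) - Real.log (∑ s, b s * K s o))|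
      ≤ ∑ o, |K sstar o * (Real.log (∑ s, b' s * K s o) - Real.log (∑ s, b s * K s o))| :=
        Finset.abs_sum_le_sum_abs _ _
    _ ≤ ∑ o, (1/η) * ∑ s, |b s - b' s| * K s o := by
        refine Finset.sum_le_sum fun o _ => ?_
        rw [abs_mul, abs_of_nonneg (hK0 sstar o).le]
        have h1 : |Real.log (∑ s, b' s * K s o) - Real.log (∑ s, b s * K s o)| ≤
            |(∑ s, b' s * K s o) - (∑ s, b s * K s o)| / η := log_lip hη (hQb' o) (hQb o)
        have h2 : |(∑ s, b' s * K s o) - (∑ s, b s * K s o)| ≤ ∑ s, |b s - b' s| * K s o := by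
          rw [← Finset.sum_sub_distrib]
          refine le_trans (Finset.abs_sum_le_sum_abs _ _) (Finset.sum_le_sum fun s _ => ?_)
          rw [← sub_mul, abs_mul, abs_of_nonneg (hK0 s o).le, abs_sub_comm]
        have hsum0 : 0 ≤ ∑ s, |b s - b' s| * K s o :=
          Finset.sum_nonneg fun s _ => mul_nonneg (abs_nonneg _) (hK0 s o).le
        calc K sstar o * |Real.log (∑ s, b' s * K s o) - Real.log (∑ s, b s * K s o)|
            ≤ 1 * (|(∑ s, b' s * K s o) - (∑ s, b s * K s o)| / η) := by
              apply mul_le_mul (hK1 o) h1 (abs_nonneg _) zero_le_one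
          _ ≤ (1/η) * ∑ s, |b s - b' s| * K s o := by
              rw [one_mul, div_le_iff₀ hη, mul_assoc, mul_comm _ η, ← mul_assoc,
                one_div, inv_mul_cancel₀ hη.ne', one_mul]
              exact h2
    _ = (1/η) * ∑ s, |b s - b' s| := by
        rw [← Finset.mul_sum, Finset.sum_comm]
        congr 1
        refine Finset.sum_congr rfl fun s _ => ?_
        rw [← Finset.mul_sum, hKrow s, mul_one]
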